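/- arXiv:1908.10557 — 2 statements merged into one kernel-verified Lean document; each statement's English description precedes it below -/
import Mathlib

section
/- Let W be the value function and {a_i*} the unique solution of the negative discount dynamic program with ℓ = c, β = 1 + τ and x̂ = 1. If the price function is p = W and the task allocation is v_i = a_i* for all i ≥ 0, then (p, {v_i}) is an equilibrium for the production chain: (1) p(0) = 0; (2) p(s) − c(s − t) − (1+τ)·p(t) ≤ 0 for all 0 ≤ t ≤ s ≤ 1; and (3) with b_0 = 1 and b_{i+1} = b_i − v_i, the profit π_i = p(b_i) − c(v_i) − (1+τ)·p(b_{i+1}) equals 0 for all i ≥ 0. -/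
/-!
A feasible allocation of `s` can start with the single task block `s - t` and continue with any
allocation of `t`, all of whose costs are then discounted by one more factor `1 + τ`; hence
`W(s) ≤ c(s - t) + (1 + τ) W(t)`. Conversely, by the principle of optimality every tail
`(a*_i, a*_{i+1}, …)` of the optimal allocation is optimal for the remaining mass `b_i`, so
`W(b_i) = c(a*_i) + (1 + τ) W(b_{i+1})` and every firm makes zero profit.
-/

open Set Filter ENNReal

/-- Total discounted cost `∑_{i=0}^∞ (1+τ)^i c(a_i)` of a task allocation, valued in `ℝ≥0∞`
(divergent sums are `∞`; the costs `c(a_i)` are nonnegative for feasible allocations). -/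
noncomputable def totalCost (τ : ℝ) (c : ℝ → ℝ) (a : ℕ → ℝ) : ℝ≥0∞ :=
  ∑' i, ENNReal.ofReal ((1 + τ) ^ i * c (a i))

/-- A sequence is a feasible allocation of a mass `x` of tasks if it is nonnegative and
sums to `x`. -/
def Feasible (x : ℝ) (a : ℕ → ℝ) : Prop :=
  (∀ i, 0 ≤ a i) ∧ HasSum a x

/-- The value function `W(x) = min { ∑_{i=0}^∞ (1+τ)^i c(a_i) : a feasible for x }`. -/
noncomputable def valueFun (τ : ℝ) (c : ℝ → ℝ) (x : ℝ) : ℝ :=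
  (⨅ (a : ℕ → ℝ) (_ : Feasible x a), totalCost τ c a).toReal

noncomputable def infCost (τ : ℝ) (c : ℝ → ℝ) (x : ℝ) : ℝ≥0∞ :=
  ⨅ (a : ℕ → ℝ) (_ : Feasible x a), totalCost τ c a

def IsOptimal (τ : ℝ) (c : ℝ → ℝ) (x : ℝ) (a : ℕ → ℝ) : Prop :=
  Feasible x a ∧ ∀ a', Feasible x a' → totalCost τ c a ≤ totalCost τ c a'

def seqCons (y : ℝ) (a : ℕ → ℝ) : ℕ → ℝ
  | 0 => y
  | n + 1 => a n

lemma valueFun_eq_toReal_infCost (τ : ℝ) (c : ℝ → ℝ) (x : ℝ) :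
    valueFun τ c x = (infCost τ c x).toReal :=
  rfl

lemma ENNReal.toReal_ofReal_add_ofReal_mul {u k : ℝ} {w : ℝ≥0∞} (hu : 0 ≤ u) (hk : 0 ≤ k)
    (hw : w ≠ ⊤) : (ENNReal.ofReal u + ENNReal.ofReal k * w).toReal = u + k * w.toReal := by
  rw [ENNReal.toReal_add ofReal_ne_top (mul_ne_top ofReal_ne_top hw), ENNReal.toReal_mul,
    toReal_ofReal hu, toReal_ofReal hk]

namespace Feasible

variable {x : ℝ} {a : ℕ → ℝ}

lemma nonneg_mass (ha : Feasible x a) : 0 ≤ x :=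
  ha.2.nonneg ha.1

lemma le_mass (ha : Feasible x a) (i : ℕ) : a i ≤ x :=
  le_hasSum ha.2 i fun j _ => ha.1 j

lemma zero : Feasible 0 (0 : ℕ → ℝ) :=
  ⟨fun _ => le_rfl, hasSum_zero⟩

lemma cons {y : ℝ} (hy : 0 ≤ y) (ha : Feasible x a) : Feasible (x + y) (seqCons y a) := by
  refine ⟨fun i => ?_, ?_⟩
  · cases i with
    | zero => exact hy
    | succ n => exact ha.1 n
  · simpa [seqCons] using (hasSum_nat_add_iff (f := seqCons y a) 1).1 ha.2

lemma tail (ha : Feasible x a) : Feasible (x - a 0) (fun n => a (n + 1)) :=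
  ⟨fun n => ha.1 (n + 1), by simpa using (hasSum_nat_add_iff' (f := a) 1).2 ha.2⟩

end Feasible

section DynamicProgram

variable {τ : ℝ} {c : ℝ → ℝ}

lemma totalCost_eq_add_mul_tail (hτ : 0 ≤ 1 + τ) (a : ℕ → ℝ) :
    totalCost τ c a
      = ENNReal.ofReal (c (a 0)) + ENNReal.ofReal (1 + τ) * totalCost τ c (fun n => a (n + 1)) := by
  unfold totalCost
  rw [tsum_eq_zero_add' ENNReal.summable, ← ENNReal.tsum_mul_left]
  simp only [pow_zero, one_mul]
  congr 1
  refine tsum_congr fun i => ?_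
  rw [← ENNReal.ofReal_mul hτ, pow_succ', mul_assoc]

lemma totalCost_seqCons (hτ : 0 ≤ 1 + τ) (y : ℝ) (a : ℕ → ℝ) :
    totalCost τ c (seqCons y a)
      = ENNReal.ofReal (c y) + ENNReal.ofReal (1 + τ) * totalCost τ c a :=
  totalCost_eq_add_mul_tail hτ _

lemma totalCost_zero (hzero : c 0 = 0) : totalCost τ c 0 = 0 := by
  simp [totalCost, hzero]

lemma infCost_le_totalCost {x : ℝ} {a : ℕ → ℝ} (ha : Feasible x a) :
    infCost τ c x ≤ totalCost τ c a :=
  iInf₂_le a ha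

lemma infCost_zero (hzero : c 0 = 0) : infCost τ c 0 = 0 :=
  nonpos_iff_eq_zero.1 <| (infCost_le_totalCost Feasible.zero).trans_eq (totalCost_zero hzero)

lemma infCost_le_add_mul (hτ : 0 < 1 + τ) {t s : ℝ} (hts : t ≤ s) :
    infCost τ c s ≤ ENNReal.ofReal (c (s - t)) + ENNReal.ofReal (1 + τ) * infCost τ c t := by
  have hk : ENNReal.ofReal (1 + τ) ≠ 0 := (ENNReal.ofReal_pos.2 hτ).ne'
  unfold infCost
  rw [ENNReal.mul_iInf_of_ne hk ofReal_ne_top, ENNReal.add_iInf]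
  refine le_iInf fun a => ?_
  rw [ENNReal.mul_iInf_of_ne hk ofReal_ne_top, ENNReal.add_iInf]
  refine le_iInf fun ha => ?_
  have hcons : Feasible s (seqCons (s - t) a) := by
    simpa using ha.cons (sub_nonneg.2 hts)
  exact (infCost_le_totalCost hcons).trans_eq (totalCost_seqCons hτ.le _ _)

-- `valueFun` is the `toReal` of `infCost`, which sends `⊤` to the junk value `0`.
lemma infCost_ne_top (hτ : 0 < 1 + τ) (hzero : c 0 = 0) {x : ℝ} (hx : 0 ≤ x) :
    infCost τ c x ≠ ⊤ := by
  refine ne_top_of_le_ne_top (add_ne_top.2 ⟨ofReal_ne_top, mul_ne_top ofReal_ne_top ?_⟩)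
    (infCost_le_add_mul hτ hx)
  simp [infCost_zero hzero]

lemma valueFun_le_add_mul (hτ : 0 < 1 + τ) (hzero : c 0 = 0) {t s : ℝ} (ht : 0 ≤ t)
    (hts : t ≤ s) (hc : 0 ≤ c (s - t)) :
    valueFun τ c s ≤ c (s - t) + (1 + τ) * valueFun τ c t := by
  have hfin := infCost_ne_top hτ hzero ht
  rw [valueFun_eq_toReal_infCost, valueFun_eq_toReal_infCost,
    ← ENNReal.toReal_ofReal_add_ofReal_mul hc hτ.le hfin]
  exact ENNReal.toReal_mono (add_ne_top.2 ⟨ofReal_ne_top, mul_ne_top ofReal_ne_top hfin⟩)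
    (infCost_le_add_mul hτ hts)

namespace IsOptimal

variable {x : ℝ} {a : ℕ → ℝ}

lemma infCost_eq (ha : IsOptimal τ c x a) : infCost τ c x = totalCost τ c a :=
  le_antisymm (infCost_le_totalCost ha.1) (le_iInf₂ ha.2)

lemma tail (hτ : 0 < 1 + τ) (ha : IsOptimal τ c x a) :
    IsOptimal τ c (x - a 0) (fun n => a (n + 1)) := by
  refine ⟨ha.1.tail, fun a' ha' => ?_⟩
  have hcons : Feasible x (seqCons (a 0) a') := by
    simpa using ha'.cons (ha.1.1 0)
  have hle := ha.2 _ hcons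
  rw [totalCost_eq_add_mul_tail hτ.le a, totalCost_seqCons hτ.le] at hle
  exact (ENNReal.mul_le_mul_iff_right (ENNReal.ofReal_pos.2 hτ).ne' ofReal_ne_top).1
    ((ENNReal.add_le_add_iff_left ofReal_ne_top).1 hle)

lemma tail_of_recursion (hτ : 0 < 1 + τ) (ha : IsOptimal τ c x a) {b : ℕ → ℝ} (hb0 : b 0 = x)
    (hbrec : ∀ i, b (i + 1) = b i - a i) (i : ℕ) :
    IsOptimal τ c (b i) (fun n => a (i + n)) := by
  induction i with
  | zero => simpa [hb0] using ha
  | succ i ih =>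
    have h := ih.tail hτ
    rw [Nat.add_zero] at h
    rw [hbrec]
    convert h using 3 with n
    omega

lemma infCost_eq_add_mul (hτ : 0 < 1 + τ) (ha : IsOptimal τ c x a) :
    infCost τ c x
      = ENNReal.ofReal (c (a 0)) + ENNReal.ofReal (1 + τ) * infCost τ c (x - a 0) := by
  rw [ha.infCost_eq, (ha.tail hτ).infCost_eq, totalCost_eq_add_mul_tail hτ.le]

lemma valueFun_eq_add_mul (hτ : 0 < 1 + τ) (hzero : c 0 = 0) (ha : IsOptimal τ c x a)
    (hc : 0 ≤ c (a 0)) :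
    valueFun τ c x = c (a 0) + (1 + τ) * valueFun τ c (x - a 0) := by
  rw [valueFun_eq_toReal_infCost, valueFun_eq_toReal_infCost, ha.infCost_eq_add_mul hτ,
    ENNReal.toReal_ofReal_add_ofReal_mul hc hτ.le
      (infCost_ne_top hτ hzero ha.1.tail.nonneg_mass)]

end IsOptimal

end DynamicProgram

theorem dynamic_program_solution_is_production_chain_equilibrium_general
    (c : ℝ → ℝ)
    (hmono : MonotoneOn c (Set.Icc (0 : ℝ) 1))
    (hzero : c 0 = 0)
    (τ : ℝ) (hτ : 0 < τ)
    (astar : ℕ → ℝ)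
    (hfeas : Feasible 1 astar)
    (hmin : ∀ a : ℕ → ℝ, Feasible 1 a → totalCost τ c astar ≤ totalCost τ c a)
    (b : ℕ → ℝ) (hb0 : b 0 = 1) (hbrec : ∀ i, b (i + 1) = b i - astar i) :
    valueFun τ c 0 = 0 ∧
    (∀ t s : ℝ, 0 ≤ t → t ≤ s → s ≤ 1 →
      valueFun τ c s - c (s - t) - (1 + τ) * valueFun τ c t ≤ 0) ∧
    (∀ i : ℕ,
      valueFun τ c (b i) - c (astar i) - (1 + τ) * valueFun τ c (b (i + 1)) = 0) := by
  have hβ : 0 < 1 + τ := by linarith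
  have hc : ∀ y ∈ Icc (0 : ℝ) 1, 0 ≤ c y := fun y hy =>
    hzero ▸ hmono ⟨le_rfl, zero_le_one⟩ hy hy.1
  refine ⟨by simp [valueFun_eq_toReal_infCost, infCost_zero hzero], ?_, fun i => ?_⟩
  · intro t s ht hts hs
    have := valueFun_le_add_mul hβ hzero ht hts (hc _ ⟨sub_nonneg.2 hts, by linarith⟩)
    linarith
  · have hopt := IsOptimal.tail_of_recursion hβ ⟨hfeas, hmin⟩ hb0 hbrec i
    have := hopt.valueFun_eq_add_mul hβ hzero (hc _ ⟨hfeas.1 _, hfeas.le_mass _⟩)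
    simp only [Nat.add_zero] at this
    rw [hbrec]
    linarith

/-- if the price function is `p = W` and the task allocation is
`v_i = a_i*` (the unique solution of the negative discount dynamic program with `ℓ = c`,
`β = 1 + τ`, `x̂ = 1`), then `(p, {v_i})` is an equilibrium for the production chain. -/
theorem dynamic_program_solution_is_production_chain_equilibrium
    (c cd : ℝ → ℝ)
    (hderiv : ∀ x ∈ Set.Icc (0 : ℝ) 1, HasDerivAt c (cd x) x)
    (hcont_deriv : ContinuousOn cd (Set.Icc (0 : ℝ) 1))
    (hmono : MonotoneOn c (Set.Icc (0 : ℝ) 1))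
    (hconv : StrictConvexOn ℝ (Set.Icc (0 : ℝ) 1) c)
    (hzero : c 0 = 0)
    (τ : ℝ) (hτ : 0 < τ)
    (astar : ℕ → ℝ)
    (hfeas : Feasible 1 astar)
    (hmin : ∀ a : ℕ → ℝ, Feasible 1 a → totalCost τ c astar ≤ totalCost τ c a)
    (b : ℕ → ℝ) (hb0 : b 0 = 1) (hbrec : ∀ i, b (i + 1) = b i - astar i) :
    valueFun τ c 0 = 0 ∧
    (∀ t s : ℝ, 0 ≤ t → t ≤ s → s ≤ 1 →
      valueFun τ c s - c (s - t) - (1 + τ) * valueFun τ c t ≤ 0) ∧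
    (∀ i : ℕ,
      valueFun τ c (b i) - c (astar i) - (1 + τ) * valueFun τ c (b (i + 1)) = 0) :=
  dynamic_program_solution_is_production_chain_equilibrium_general c hmono hzero τ hτ astar hfeas
    hmin b hb0 hbrec
end

section
/- Let c(v) = κ·v^{1/η} with κ > 0 and 0 < η < 1, let τ > 0, and set θ := (1+τ)^{η/(η−1)}, so 0 < θ < 1. Then the unique minimizer of ∑_{i=0}^∞ (1+τ)^i c(a_i) over nonnegative sequences with ∑_{i=0}^∞ a_i = 1 is a_i* = θ^i (1 − θ), and the value function satisfies W(x) = κ·(1 − θ)^{(1−η)/η}·x^{1/η} for all x ∈ [0, 1]. -/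
/-!
With `p = 1/η > 1` and `β = 1 + τ`, the exponent of `θ` is chosen so that `β θ^(p-1) = 1`.
Then along `a_i* = θ^i (1 - θ)` the marginal cost `β^i c'(a_i*)` is the same constant `m` for
every `i`: this is the first-order condition of the Lagrangian with multiplier `m`. Strict
convexity of `s ↦ s^p` puts each `β^i c` strictly above its tangent line of slope `m` at `a_i*`,
and summing these tangent-line inequalities against any feasible `a` (whose mass equals that of
`a*`) gives optimality and uniqueness. The same computation for `θ^i (1 - θ) x` gives `W(x)`.
-/

open Set Filter ENNReal Real

theorem rpow_tangent_lt {p s t : ℝ} (hp : 1 < p) (hs : 0 ≤ s) (ht : 0 < t) (hst : s ≠ t) :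
    t ^ p + p * t ^ (p - 1) * (s - t) < s ^ p := by
  have hbernoulli : 1 + p * (s / t - 1) < (1 + (s / t - 1)) ^ p :=
    one_add_mul_self_lt_rpow_one_add (by linarith [div_nonneg hs ht.le])
      (sub_ne_zero.mpr fun h => hst ((div_eq_one_iff_eq ht.ne').mp h)) hp
  rw [add_sub_cancel, div_rpow hs ht.le] at hbernoulli
  have htp : 0 < t ^ p := rpow_pos_of_pos ht p
  calc t ^ p + p * t ^ (p - 1) * (s - t) = (1 + p * (s / t - 1)) * t ^ p := by
        rw [rpow_sub_one ht.ne']; field_simp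
    _ < s ^ p / t ^ p * t ^ p := mul_lt_mul_of_pos_right hbernoulli htp
    _ = s ^ p := div_mul_cancel₀ _ htp.ne'

section SupportingLine

variable {f : ℕ → ℝ → ℝ} {g t a : ℕ → ℝ} {x m : ℝ}

theorem tsum_ofReal_add_mul_eq (hg : ∀ i, 0 ≤ g i) (ht : Feasible x t) (hm : 0 ≤ m) :
    ∑' i, ENNReal.ofReal (g i + m * t i)
      = ∑' i, ENNReal.ofReal (g i) + ENNReal.ofReal (m * x) := by
  have hmt : ∀ i, 0 ≤ m * t i := fun i => mul_nonneg hm (ht.1 i)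
  simp only [ENNReal.ofReal_add (hg _) (hmt _)]
  rw [ENNReal.tsum_add, ← ENNReal.ofReal_tsum_of_nonneg hmt (ht.2.summable.mul_left m),
    (ht.2.mul_left m).tsum_eq]

variable (hf : ∀ i s, 0 ≤ s → 0 ≤ f i s) (hm : 0 ≤ m) (ht : Feasible x t) (ha : Feasible x a)
include hf hm ht ha

/-- Summing the tangent-line inequalities, the Lagrangian terms `m * a i` and `m * t i` both
add up to `m * x` and cancel. -/
theorem tsum_ofReal_le_of_supportingLine
    (hsupp : ∀ i s, 0 ≤ s → f i (t i) + m * s ≤ f i s + m * t i) :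
    ∑' i, ENNReal.ofReal (f i (t i)) ≤ ∑' i, ENNReal.ofReal (f i (a i)) := by
  have h := ENNReal.tsum_le_tsum fun i => ENNReal.ofReal_le_ofReal (hsupp i (a i) (ha.1 i))
  rw [tsum_ofReal_add_mul_eq (fun i => hf i _ (ht.1 i)) ha hm,
    tsum_ofReal_add_mul_eq (fun i => hf i _ (ha.1 i)) ht hm] at h
  exact (ENNReal.add_le_add_iff_right ENNReal.ofReal_ne_top).mp h

theorem tsum_ofReal_lt_of_supportingLine
    (hsupp : ∀ i s, 0 ≤ s → s ≠ t i → f i (t i) + m * s < f i s + m * t i)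
    (hfin : ∑' i, ENNReal.ofReal (f i (t i)) ≠ ⊤) (hne : a ≠ t) :
    ∑' i, ENNReal.ofReal (f i (t i)) < ∑' i, ENNReal.ofReal (f i (a i)) := by
  obtain ⟨j, hj⟩ := Function.ne_iff.mp hne
  have hle : ∀ i, f i (t i) + m * a i ≤ f i (a i) + m * t i := fun i => by
    rcases eq_or_ne (a i) (t i) with h | h
    · rw [h]
    · exact (hsupp i _ (ha.1 i) h).le
  have h := ENNReal.tsum_lt_tsum (i := j)
    (by rw [tsum_ofReal_add_mul_eq (fun i => hf i _ (ht.1 i)) ha hm]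
        exact ENNReal.add_ne_top.mpr ⟨hfin, ENNReal.ofReal_ne_top⟩)
    (fun i => ENNReal.ofReal_le_ofReal (hle i))
    ((ENNReal.ofReal_lt_ofReal_iff_of_nonneg
      (add_nonneg (hf j _ (ht.1 j)) (mul_nonneg hm (ha.1 j)))).mpr (hsupp j _ (ha.1 j) hj))
  rw [tsum_ofReal_add_mul_eq (fun i => hf i _ (ht.1 i)) ha hm,
    tsum_ofReal_add_mul_eq (fun i => hf i _ (ha.1 i)) ht hm] at h
  exact (ENNReal.add_lt_add_iff_right ENNReal.ofReal_ne_top).mp h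

end SupportingLine

def geomAlloc (θ x : ℝ) (i : ℕ) : ℝ :=
  θ ^ i * ((1 - θ) * x)

theorem feasible_geomAlloc {θ x : ℝ} (hθ0 : 0 ≤ θ) (hθ1 : θ < 1) (hx : 0 ≤ x) :
    Feasible x (geomAlloc θ x) := by
  refine ⟨fun i => mul_nonneg (pow_nonneg hθ0 i) (mul_nonneg (by linarith) hx), ?_⟩
  have h := (hasSum_geometric_of_lt_one hθ0 hθ1).mul_right ((1 - θ) * x)
  rwa [← mul_assoc, inv_mul_cancel₀ (by linarith), one_mul] at h

section PowerCost

variable {κ p τ θ x : ℝ} {c : ℝ → ℝ}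

theorem geomAlloc_rpow (hθ0 : 0 < θ) (hθ1 : θ < 1) (hx : 0 ≤ x) (q : ℝ) (i : ℕ) :
    geomAlloc θ x i ^ q = (θ ^ q) ^ i * ((1 - θ) * x) ^ q := by
  rw [geomAlloc, mul_rpow (pow_nonneg hθ0.le i) (mul_nonneg (by linarith) hx),
    ← Real.rpow_natCast, ← Real.rpow_natCast, ← Real.rpow_mul hθ0.le, ← Real.rpow_mul hθ0.le,
    mul_comm (i : ℝ) q]

theorem discounted_cost_nonneg (hc : ∀ s, c s = κ * s ^ p) (hβ : 0 ≤ 1 + τ) (hκ : 0 ≤ κ)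
    (i : ℕ) {s : ℝ} (hs : 0 ≤ s) : 0 ≤ (1 + τ) ^ i * c s := by
  rw [hc]
  exact mul_nonneg (pow_nonneg hβ i) (mul_nonneg hκ (rpow_nonneg hs p))

variable (hθ0 : 0 < θ) (hβθ : (1 + τ) * θ ^ (p - 1) = 1)
include hθ0 hβθ

theorem one_add_pos_of_mul_rpow_eq_one : 0 < 1 + τ :=
  pos_of_mul_pos_left (hβθ ▸ one_pos) (rpow_pos_of_pos hθ0 _).le

variable (hθ1 : θ < 1)
include hθ1

theorem discounted_marginal_geomAlloc (hx : 0 ≤ x) (i : ℕ) :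
    (1 + τ) ^ i * geomAlloc θ x i ^ (p - 1) = ((1 - θ) * x) ^ (p - 1) := by
  rw [geomAlloc_rpow hθ0 hθ1 hx, ← mul_assoc, ← mul_pow, hβθ, one_pow, one_mul]

variable (hc : ∀ s, c s = κ * s ^ p)
include hc

theorem discounted_cost_geomAlloc (hx : 0 ≤ x) (i : ℕ) :
    (1 + τ) ^ i * c (geomAlloc θ x i) = κ * ((1 - θ) * x) ^ p * θ ^ i := by
  have hβθp : (1 + τ) * θ ^ p = θ := by
    rw [← sub_add_cancel p 1, rpow_add_one hθ0.ne', ← mul_assoc, hβθ, one_mul]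
  calc (1 + τ) ^ i * c (geomAlloc θ x i)
      = κ * ((1 - θ) * x) ^ p * ((1 + τ) * θ ^ p) ^ i := by
        rw [hc, geomAlloc_rpow hθ0 hθ1 hx, mul_pow]; ring
    _ = κ * ((1 - θ) * x) ^ p * θ ^ i := by rw [hβθp]

theorem totalCost_geomAlloc (hκ : 0 ≤ κ) (hx : 0 ≤ x) :
    totalCost τ c (geomAlloc θ x) = ENNReal.ofReal (κ * (1 - θ) ^ (p - 1) * x ^ p) := by
  have h1θ : 0 < 1 - θ := by linarith
  have hgeom := summable_geometric_of_lt_one hθ0.le hθ1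
  rw [totalCost]
  simp only [discounted_cost_geomAlloc hθ0 hβθ hθ1 hc hx]
  rw [← ENNReal.ofReal_tsum_of_nonneg (fun i => by positivity) (hgeom.mul_left _), tsum_mul_left,
    tsum_geometric_of_lt_one hθ0.le hθ1, mul_rpow h1θ.le hx, rpow_sub_one h1θ.ne']
  field_simp

theorem discounted_cost_tangent_lt (hκ : 0 < κ) (hp : 1 < p) (hx : 0 < x) (i : ℕ) {s : ℝ}
    (hs : 0 ≤ s) (hne : s ≠ geomAlloc θ x i) :
    (1 + τ) ^ i * c (geomAlloc θ x i) + κ * p * ((1 - θ) * x) ^ (p - 1) * s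
      < (1 + τ) ^ i * c s + κ * p * ((1 - θ) * x) ^ (p - 1) * geomAlloc θ x i := by
  have hpos : 0 < geomAlloc θ x i := mul_pos (pow_pos hθ0 i) (mul_pos (by linarith) hx)
  have hβκ : 0 < (1 + τ) ^ i * κ :=
    mul_pos (pow_pos (one_add_pos_of_mul_rpow_eq_one hθ0 hβθ) i) hκ
  have h := mul_lt_mul_of_pos_left (rpow_tangent_lt hp hs hpos hne) hβκ
  rw [← discounted_marginal_geomAlloc hθ0 hβθ hθ1 hx.le i, hc, hc]
  linarith

theorem totalCost_geomAlloc_le (hκ : 0 < κ) (hp : 1 < p) (hx : 0 < x) {a : ℕ → ℝ}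
    (ha : Feasible x a) : totalCost τ c (geomAlloc θ x) ≤ totalCost τ c a := by
  refine tsum_ofReal_le_of_supportingLine (f := fun i s => (1 + τ) ^ i * c s)
    (m := κ * p * ((1 - θ) * x) ^ (p - 1))
    (fun i _ => discounted_cost_nonneg hc (one_add_pos_of_mul_rpow_eq_one hθ0 hβθ).le hκ.le i)
    (by positivity) (feasible_geomAlloc hθ0.le hθ1 hx.le) ha fun i s hs => ?_
  rcases eq_or_ne s (geomAlloc θ x i) with rfl | hne
  · rfl
  · exact (discounted_cost_tangent_lt hθ0 hβθ hθ1 hc hκ hp hx i hs hne).le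

theorem eq_geomAlloc_of_totalCost_eq (hκ : 0 < κ) (hp : 1 < p) (hx : 0 < x) {a : ℕ → ℝ}
    (ha : Feasible x a) (heq : totalCost τ c a = totalCost τ c (geomAlloc θ x)) :
    a = geomAlloc θ x := by
  by_contra hne
  have hfin : totalCost τ c (geomAlloc θ x) ≠ ⊤ :=
    (totalCost_geomAlloc hθ0 hβθ hθ1 hc hκ.le hx.le).trans_ne ENNReal.ofReal_ne_top
  exact (tsum_ofReal_lt_of_supportingLine (f := fun i s => (1 + τ) ^ i * c s)
    (m := κ * p * ((1 - θ) * x) ^ (p - 1))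
    (fun i _ => discounted_cost_nonneg hc (one_add_pos_of_mul_rpow_eq_one hθ0 hβθ).le hκ.le i)
    (by positivity) (feasible_geomAlloc hθ0.le hθ1 hx.le) ha
    (fun i _ => discounted_cost_tangent_lt hθ0 hβθ hθ1 hc hκ hp hx i) hfin hne).ne' heq

theorem valueFun_eq (hκ : 0 < κ) (hp : 1 < p) (hx : 0 ≤ x) :
    valueFun τ c x = κ * (1 - θ) ^ (p - 1) * x ^ p := by
  have hcost := totalCost_geomAlloc hθ0 hβθ hθ1 hc hκ.le hx
  have hinf : ⨅ (a : ℕ → ℝ) (_ : Feasible x a), totalCost τ c a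
      = ENNReal.ofReal (κ * (1 - θ) ^ (p - 1) * x ^ p) := by
    refine le_antisymm (hcost ▸ iInf₂_le _ (feasible_geomAlloc hθ0.le hθ1 hx)) ?_
    rcases hx.eq_or_lt with rfl | hx
    · simp [zero_rpow (by linarith : p ≠ 0)]
    · exact le_iInf₂ fun a ha => hcost ▸ totalCost_geomAlloc_le hθ0 hβθ hθ1 hc hκ hp hx ha
  rw [valueFun, hinf, ENNReal.toReal_ofReal (by positivity)]

end PowerCost

/-- closed-form solution with `c(v) = κ·v^{1/η}`: with
`θ = (1+τ)^{η/(η−1)} ∈ (0,1)`, the unique minimizer is `a_i* = θ^i (1 − θ)` and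
`W(x) = κ (1 − θ)^{(1−η)/η} x^{1/η}` on `[0, 1]`. -/
theorem closed_form_solution_cobb_douglas
    (κ : ℝ) (hκ : 0 < κ)
    (η : ℝ) (hη0 : 0 < η) (hη1 : η < 1)
    (τ : ℝ) (hτ : 0 < τ)
    (c : ℝ → ℝ) (hc : ∀ v : ℝ, c v = κ * v ^ (1 / η))
    (θ : ℝ) (hθ : θ = (1 + τ) ^ (η / (η - 1)))
    (astar : ℕ → ℝ) (hastar : ∀ i, astar i = θ ^ i * (1 - θ)) :
    (0 < θ ∧ θ < 1) ∧
    Feasible 1 astar ∧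
    (∀ a : ℕ → ℝ, Feasible 1 a → totalCost τ c astar ≤ totalCost τ c a) ∧
    (∀ a : ℕ → ℝ, Feasible 1 a → totalCost τ c a = totalCost τ c astar → a = astar) ∧
    (∀ x ∈ Set.Icc (0 : ℝ) 1,
      valueFun τ c x = κ * (1 - θ) ^ ((1 - η) / η) * x ^ (1 / η)) := by
  have hp : 1 < 1 / η := by rw [lt_div_iff₀ hη0]; linarith
  have hθ0 : 0 < θ := hθ ▸ rpow_pos_of_pos (by linarith) _
  have hθ1 : θ < 1 :=
    hθ ▸ rpow_lt_one_of_one_lt_of_neg (by linarith) (div_neg_of_pos_of_neg hη0 (by linarith))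
  have hβθ : (1 + τ) * θ ^ (1 / η - 1) = 1 := by
    have hexp : 1 + η / (η - 1) * (1 / η - 1) = 0 := by
      field_simp [sub_ne_zero.mpr hη1.ne]; ring
    nth_rw 1 [← Real.rpow_one (1 + τ)]
    rw [hθ, ← Real.rpow_mul (by linarith), ← Real.rpow_add (by linarith), hexp, Real.rpow_zero]
  have hastar' : astar = geomAlloc θ 1 := funext fun i => by rw [hastar, geomAlloc, mul_one]
  subst hastar'
  refine ⟨⟨hθ0, hθ1⟩, feasible_geomAlloc hθ0.le hθ1 zero_le_one,
    fun a => totalCost_geomAlloc_le hθ0 hβθ hθ1 hc hκ hp one_pos,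
    fun a => eq_geomAlloc_of_totalCost_eq hθ0 hβθ hθ1 hc hκ hp one_pos,
    fun x hx => ?_⟩
  rw [valueFun_eq hθ0 hβθ hθ1 hc hκ hp hx.1, show (1 - η) / η = 1 / η - 1 by field_simp]
end
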